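/- Uniform directional bound for the semimetric ρ over the Lipschitz class (step in the proof of the continuity lemma): Let d ≥ 1, R > 0, p > 1, L = p·(2R)^{p−1}, and let P, Q be probability measures on ℝ^d supported in the closed ball B̄(0,R). Then there exists a constant C depending only on R and p such that for every f ∈ 𝒞_{R,L} and all unit vectors u, v ∈ S^{d−1}: ρ((f,u),(f,v)) ≤ C·( (∫ |⟨u,x⟩ − ⟨v,x⟩|² dP(x))^{1/2} + (∫ |⟨u,y⟩ − ⟨v,y⟩|² dQ(y))^{1/2} ) ≤ 2·C·R·‖u − v‖₂. In particular, sup_{f ∈ 𝒞_{R,L}} ρ((f,u),(f,v)) → 0 as v → u. -/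

import Mathlib

/-!
The constant is `C = L = p (2R)^(p-1)`. The function `f` is `L`-Lipschitz on `[-R, R]` by
assumption, and so is `f^c`, as an infimum of the functions `y ↦ |x - y|^p - f x`, each of which
is `L`-Lipschitz on `[-R, R]` by the mean value theorem because `|x - y| ≤ 2R` there. On the ball
`B̄(0, R)` both `⟨u, x⟩` and `⟨v, x⟩` lie in `[-R, R]`, so each half of `ρ((f,u),(f,v))` is at most
`L` times the `L²` distance of `⟨u, ·⟩` and `⟨v, ·⟩`, which Cauchy–Schwarz bounds by `R ‖u - v‖`.
-/

open MeasureTheory Set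

/-- The class `𝒞_{R,L}` of functions vanishing at `0` and `L`-Lipschitz on `[-R, R]`. -/
def CRL (R L : ℝ) : Set (ℝ → ℝ) :=
  {f | f 0 = 0 ∧ ∀ x ∈ Set.Icc (-R) R, ∀ x' ∈ Set.Icc (-R) R, |f x - f x'| ≤ L * |x - x'|}

/-- The `c`-transform `f^c(y) = inf_{x ∈ [-R,R]} (|x-y|^p - f(x))`. -/
noncomputable def ctrans (R p : ℝ) (f : ℝ → ℝ) : ℝ → ℝ :=
  fun y => sInf {z : ℝ | ∃ x ∈ Set.Icc (-R) R, z = |x - y| ^ p - f x}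

/-- The unit sphere `S^{d-1}` in `ℝ^d`. -/
def sph (d : ℕ) : Set (EuclideanSpace ℝ (Fin d)) :=
  Metric.sphere (0 : EuclideanSpace ℝ (Fin d)) 1

/-- The semimetric `ρ` on `𝒞_{R,L} × S^{d-1}`. -/
noncomputable def rho {d : ℕ} (R p : ℝ)
    (P Q : Measure (EuclideanSpace ℝ (Fin d)))
    (f : ℝ → ℝ) (u : EuclideanSpace ℝ (Fin d))
    (g : ℝ → ℝ) (v : EuclideanSpace ℝ (Fin d)) : ℝ :=
  Real.sqrt (∫ x, (f (inner ℝ u x : ℝ) - g (inner ℝ v x : ℝ)) ^ 2 ∂P) +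
  Real.sqrt (∫ y, (ctrans R p f (inner ℝ u y : ℝ) - ctrans R p g (inner ℝ v y : ℝ)) ^ 2 ∂Q)

lemma abs_rpow_sub_rpow_le {p M s t : ℝ} (hp : 1 ≤ p) (hs : s ∈ Icc 0 M) (ht : t ∈ Icc 0 M) :
    |s ^ p - t ^ p| ≤ p * M ^ (p - 1) * |s - t| := by
  have hderiv : ∀ x ∈ Icc (0 : ℝ) M,
      HasDerivWithinAt (fun x : ℝ => x ^ p) (p * x ^ (p - 1)) (Icc 0 M) x :=
    fun x _ => (Real.hasDerivAt_rpow_const (Or.inr hp)).hasDerivWithinAt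
  have hbound : ∀ x ∈ Icc (0 : ℝ) M, ‖p * x ^ (p - 1)‖ ≤ p * M ^ (p - 1) := by
    intro x hx
    rw [Real.norm_eq_abs, abs_of_nonneg (by have := hx.1; positivity)]
    exact mul_le_mul_of_nonneg_left (Real.rpow_le_rpow hx.1 hx.2 (by linarith)) (by linarith)
  simpa only [Real.norm_eq_abs] using
    Convex.norm_image_sub_le_of_norm_hasDerivWithin_le hderiv hbound (convex_Icc _ _) ht hs

lemma abs_abs_sub_rpow_sub_le {R p x a b : ℝ} (hp : 1 ≤ p) (hx : x ∈ Icc (-R) R)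
    (ha : a ∈ Icc (-R) R) (hb : b ∈ Icc (-R) R) :
    |(|x - a| ^ p) - (|x - b| ^ p)| ≤ p * (2 * R) ^ (p - 1) * |a - b| := by
  have hmem : ∀ c ∈ Icc (-R) R, |x - c| ∈ Icc 0 (2 * R) := fun c hc =>
    ⟨abs_nonneg _, abs_sub_le_iff.mpr ⟨by linarith [hx.2, hc.1], by linarith [hx.1, hc.2]⟩⟩
  calc |(|x - a| ^ p) - (|x - b| ^ p)|
      ≤ p * (2 * R) ^ (p - 1) * |(|x - a|) - (|x - b|)| :=
        abs_rpow_sub_rpow_le hp (hmem a ha) (hmem b hb)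
    _ ≤ p * (2 * R) ^ (p - 1) * |a - b| := by
        have hR : 0 ≤ R := by linarith [hx.1, hx.2]
        refine mul_le_mul_of_nonneg_left ?_ (by positivity)
        simpa only [sub_sub_sub_cancel_left, abs_sub_comm b a] using
          abs_abs_sub_abs_le_abs_sub (x - a) (x - b)

lemma abs_csInf_image_sub_csInf_image_le {ι : Type*} {s : Set ι} (hs : s.Nonempty)
    {g : ι → ℝ → ℝ} {T : Set ℝ} {L : ℝ} (hbdd : ∀ y ∈ T, BddBelow ((g · y) '' s))
    (hg : ∀ i ∈ s, ∀ a ∈ T, ∀ b ∈ T, |g i a - g i b| ≤ L * |a - b|)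
    {a b : ℝ} (ha : a ∈ T) (hb : b ∈ T) :
    |sInf ((g · a) '' s) - sInf ((g · b) '' s)| ≤ L * |a - b| := by
  have hle : ∀ a ∈ T, ∀ b ∈ T, sInf ((g · a) '' s) ≤ sInf ((g · b) '' s) + L * |a - b| := by
    intro a ha b hb
    rw [← sub_le_iff_le_add]
    refine le_csInf (hs.image _) (forall_mem_image.mpr fun i hi => ?_)
    have hinf : sInf ((g · a) '' s) ≤ g i a := csInf_le (hbdd a ha) (mem_image_of_mem _ hi)
    linarith [(abs_le.mp (hg i hi a ha b hb)).2]
  rw [abs_sub_le_iff]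
  constructor
  · linarith [hle a ha b hb]
  · linarith [abs_sub_comm b a ▸ hle b hb a ha]

lemma ctrans_eq_csInf_image (R p : ℝ) (f : ℝ → ℝ) (y : ℝ) :
    ctrans R p f y = sInf ((fun x => |x - y| ^ p - f x) '' Icc (-R) R) := by
  simp only [ctrans, image, eq_comm]

lemma abs_ctrans_sub_ctrans_le {R p : ℝ} (hR : 0 ≤ R) (hp : 1 ≤ p) {f : ℝ → ℝ}
    (hf : BddAbove (f '' Icc (-R) R)) {a b : ℝ} (ha : a ∈ Icc (-R) R) (hb : b ∈ Icc (-R) R) :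
    |ctrans R p f a - ctrans R p f b| ≤ p * (2 * R) ^ (p - 1) * |a - b| := by
  obtain ⟨B, hB⟩ := hf
  have hne : (Icc (-R) R).Nonempty := nonempty_Icc.mpr (by linarith)
  simp only [ctrans_eq_csInf_image]
  refine abs_csInf_image_sub_csInf_image_le (g := fun x y => |x - y| ^ p - f x) hne
    (fun y _ => ⟨-B, forall_mem_image.mpr fun x hx => ?_⟩)
    (fun x hx a ha b hb => ?_) ha hb
  · have : 0 ≤ |x - y| ^ p := by positivity
    linarith [hB (mem_image_of_mem f hx)]
  · simpa only [sub_sub_sub_cancel_right] using abs_abs_sub_rpow_sub_le hp hx ha hb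

lemma bddAbove_image_of_mem_CRL {R L : ℝ} {f : ℝ → ℝ} (hf : f ∈ CRL R L) :
    BddAbove (f '' Icc (-R) R) := by
  refine ⟨|L| * R, forall_mem_image.mpr fun x hx => ?_⟩
  have h0 : (0 : ℝ) ∈ Icc (-R) R := ⟨by linarith [hx.1, hx.2], by linarith [hx.1, hx.2]⟩
  have hlip := hf.2 x hx 0 h0
  rw [hf.1, sub_zero, sub_zero] at hlip
  calc f x ≤ |f x| := le_abs_self _
    _ ≤ L * |x| := hlip
    _ ≤ |L| * R := mul_le_mul (le_abs_self L) (abs_le.mpr hx) (abs_nonneg x) (abs_nonneg L)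

lemma sqrt_integral_le_mul_sqrt_integral {α : Type*} [MeasurableSpace α] {μ : Measure α}
    {g h : α → ℝ} {C : ℝ} (hC : 0 ≤ C) (hg : 0 ≤ᵐ[μ] g) (hh : Integrable h μ)
    (hgh : ∀ᵐ x ∂μ, g x ≤ C ^ 2 * h x) :
    √(∫ x, g x ∂μ) ≤ C * √(∫ x, h x ∂μ) := by
  calc √(∫ x, g x ∂μ) ≤ √(∫ x, C ^ 2 * h x ∂μ) :=
        Real.sqrt_le_sqrt (integral_mono_of_nonneg hg (hh.const_mul _) hgh)
    _ = C * √(∫ x, h x ∂μ) := by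
        rw [integral_const_mul, Real.sqrt_mul (sq_nonneg C), Real.sqrt_sq hC]

lemma inner_mem_Icc_of_norm_le {E : Type*} [NormedAddCommGroup E] [InnerProductSpace ℝ E]
    {R : ℝ} {u x : E} (hu : ‖u‖ ≤ 1) (hx : ‖x‖ ≤ R) :
    inner ℝ u x ∈ Icc (-R) R := by
  refine abs_le.mp ((abs_real_inner_le_norm u x).trans ?_)
  calc ‖u‖ * ‖x‖ ≤ 1 * R := mul_le_mul hu hx (norm_nonneg x) zero_le_one
    _ = R := one_mul R

lemma sq_inner_sub_inner_le {E : Type*} [NormedAddCommGroup E] [InnerProductSpace ℝ E]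
    {R : ℝ} {u v x : E} (hx : ‖x‖ ≤ R) :
    (inner ℝ u x - inner ℝ v x) ^ 2 ≤ (R * ‖u - v‖) ^ 2 := by
  rw [← inner_sub_left, ← sq_abs]
  gcongr
  calc |inner ℝ (u - v) x| ≤ ‖u - v‖ * ‖x‖ := abs_real_inner_le_norm _ _
    _ ≤ R * ‖u - v‖ := by rw [mul_comm]; gcongr

section ConcentratedOnBall

variable {E : Type*} [NormedAddCommGroup E] [MeasurableSpace E] [OpensMeasurableSpace E]
  {μ : Measure E} {R : ℝ}

lemma ae_norm_le_of_measure_closedBall_eq_one [IsProbabilityMeasure μ]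
    (hμ : μ (Metric.closedBall 0 R) = 1) : ∀ᵐ x ∂μ, ‖x‖ ≤ R := by
  have hmeas : NullMeasurableSet {x : E | ‖x‖ ≤ R} μ :=
    (isClosed_le continuous_norm continuous_const).measurableSet.nullMeasurableSet
  rw [ae_iff_measure_eq hmeas, measure_univ]
  simpa only [Metric.closedBall, dist_zero_right] using hμ

variable [InnerProductSpace ℝ E]

lemma integrable_sq_inner_sub_inner [IsFiniteMeasure μ] (hμ : ∀ᵐ x ∂μ, ‖x‖ ≤ R) (u v : E) :
    Integrable (fun x => (inner ℝ u x - inner ℝ v x) ^ 2) μ := by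
  refine (integrable_const ((R * ‖u - v‖) ^ 2)).mono' (by fun_prop) ?_
  filter_upwards [hμ] with x hx
  rw [Real.norm_eq_abs, abs_sq]
  exact sq_inner_sub_inner_le hx

lemma sqrt_integral_sq_comp_inner_sub_le [IsFiniteMeasure μ] (hμ : ∀ᵐ x ∂μ, ‖x‖ ≤ R)
    {F : ℝ → ℝ} {C : ℝ} (hC : 0 ≤ C)
    (hF : ∀ s ∈ Icc (-R) R, ∀ t ∈ Icc (-R) R, |F s - F t| ≤ C * |s - t|)
    {u v : E} (hu : ‖u‖ ≤ 1) (hv : ‖v‖ ≤ 1) :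
    √(∫ x, (F (inner ℝ u x) - F (inner ℝ v x)) ^ 2 ∂μ) ≤
      C * √(∫ x, (inner ℝ u x - inner ℝ v x) ^ 2 ∂μ) := by
  refine sqrt_integral_le_mul_sqrt_integral hC (ae_of_all _ fun x => sq_nonneg _)
    (integrable_sq_inner_sub_inner hμ u v) ?_
  filter_upwards [hμ] with x hx
  calc (F (inner ℝ u x) - F (inner ℝ v x)) ^ 2 = |F (inner ℝ u x) - F (inner ℝ v x)| ^ 2 :=
        (sq_abs _).symm
    _ ≤ (C * |inner ℝ u x - inner ℝ v x|) ^ 2 := by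
        gcongr
        exact hF _ (inner_mem_Icc_of_norm_le hu hx) _ (inner_mem_Icc_of_norm_le hv hx)
    _ = C ^ 2 * (inner ℝ u x - inner ℝ v x) ^ 2 := by rw [mul_pow, sq_abs]

omit [OpensMeasurableSpace E] in
lemma sqrt_integral_sq_inner_sub_inner_le [IsProbabilityMeasure μ] (hμ : ∀ᵐ x ∂μ, ‖x‖ ≤ R)
    (u v : E) : √(∫ x, (inner ℝ u x - inner ℝ v x) ^ 2 ∂μ) ≤ R * ‖u - v‖ := by
  obtain ⟨x₀, hx₀⟩ := hμ.exists
  have hR : 0 ≤ R := (norm_nonneg x₀).trans hx₀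
  have hsq : ∀ᵐ x ∂μ, (inner ℝ u x - inner ℝ v x) ^ 2 ≤ (R * ‖u - v‖) ^ 2 * 1 := by
    filter_upwards [hμ] with x hx
    rw [mul_one]
    exact sq_inner_sub_inner_le hx
  calc √(∫ x, (inner ℝ u x - inner ℝ v x) ^ 2 ∂μ)
      ≤ R * ‖u - v‖ * √(∫ _, (1 : ℝ) ∂μ) :=
        sqrt_integral_le_mul_sqrt_integral (by positivity) (ae_of_all _ fun x => sq_nonneg _)
          (integrable_const 1) hsq
    _ = R * ‖u - v‖ := by simp

end ConcentratedOnBall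

/-- Uniform directional bound for the semimetric `ρ` over the Lipschitz class. -/
theorem rho_directional_bound (R p : ℝ) (hR : 0 < R) (hp : 1 < p) :
    ∃ C : ℝ, 0 < C ∧ ∀ d : ℕ, 1 ≤ d →
      ∀ P Q : Measure (EuclideanSpace ℝ (Fin d)),
        IsProbabilityMeasure P → IsProbabilityMeasure Q →
        P (Metric.closedBall 0 R) = 1 → Q (Metric.closedBall 0 R) = 1 →
        ∀ f ∈ CRL R (p * (2 * R) ^ (p - 1)), ∀ u ∈ sph d, ∀ v ∈ sph d,
          rho R p P Q f u f v ≤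
              C * (Real.sqrt (∫ x, ((inner ℝ u x : ℝ) - (inner ℝ v x : ℝ)) ^ 2 ∂P) +
                Real.sqrt (∫ y, ((inner ℝ u y : ℝ) - (inner ℝ v y : ℝ)) ^ 2 ∂Q)) ∧
            C * (Real.sqrt (∫ x, ((inner ℝ u x : ℝ) - (inner ℝ v x : ℝ)) ^ 2 ∂P) +
                Real.sqrt (∫ y, ((inner ℝ u y : ℝ) - (inner ℝ v y : ℝ)) ^ 2 ∂Q)) ≤
              2 * C * R * ‖u - v‖ := by
  refine ⟨p * (2 * R) ^ (p - 1), by positivity, fun d _ P Q _ _ hP hQ f hf u hu v hv => ?_⟩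
  have hu' : ‖u‖ ≤ 1 := (mem_sphere_zero_iff_norm.mp hu).le
  have hv' : ‖v‖ ≤ 1 := (mem_sphere_zero_iff_norm.mp hv).le
  have hP' := ae_norm_le_of_measure_closedBall_eq_one hP
  have hQ' := ae_norm_le_of_measure_closedBall_eq_one hQ
  have hfc : ∀ s ∈ Icc (-R) R, ∀ t ∈ Icc (-R) R,
      |ctrans R p f s - ctrans R p f t| ≤ p * (2 * R) ^ (p - 1) * |s - t| :=
    fun s hs t ht => abs_ctrans_sub_ctrans_le hR.le hp.le (bddAbove_image_of_mem_CRL hf) hs ht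
  constructor
  · rw [rho, mul_add]
    exact add_le_add (sqrt_integral_sq_comp_inner_sub_le hP' (by positivity) hf.2 hu' hv')
      (sqrt_integral_sq_comp_inner_sub_le hQ' (by positivity) hfc hu' hv')
  · calc _ ≤ p * (2 * R) ^ (p - 1) * (R * ‖u - v‖ + R * ‖u - v‖) := by
          gcongr
          · exact sqrt_integral_sq_inner_sub_inner_le hP' u v
          · exact sqrt_integral_sq_inner_sub_inner_le hQ' u v
      _ = _ := by ring
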